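/- Let W be a committee of size k (with k ≥ 1), let ℓ be an integer with 1 ≤ ℓ ≤ k, and let X ⊆ N be a set of voters with |X| ≥ ℓ·n/k and |⋂_{i∈X} A_i| ≥ ℓ such that every voter i ∈ X has |W ∩ A_i| ≤ ℓ − 1. Then for any candidate c ∈ (⋂_{i∈X} A_i) \ W, it holds that PAV-score(W ∪ {c}) − PAV-score(W) ≥ |X|/ℓ ≥ n/k. -/

import Mathlib

open Finset

noncomputable def Hval (p : ℕ) : ℝ := ∑ j ∈ Finset.range p, (1 : ℝ) / (j + 1)

noncomputable def pavScore {C : Type*} [DecidableEq C] {n : ℕ}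
    (A : Fin n → Finset C) (W : Finset C) : ℝ :=
  ∑ i, Hval ((W ∩ A i).card)

noncomputable def mc {C : Type*} [DecidableEq C] {n : ℕ}
    (A : Fin n → Finset C) (w : C) (W : Finset C) : ℝ :=
  pavScore A W - pavScore A (W.erase w)

/-! Adding `c` raises the harmonic utility of each voter of `X` by `1/(|W ∩ Aᵢ| + 1) ≥ 1/ℓ`,
and no voter loses utility, so the PAV-score grows by at least `|X|/ℓ`. The second bound is
`|X| ≥ ℓn/k` divided by `ℓ`. -/

lemma Hval_succ (p : ℕ) : Hval (p + 1) = Hval p + 1 / (p + 1) := by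
  simp [Hval, Finset.sum_range_succ]

lemma Hval_mono : Monotone Hval := fun _ _ hab =>
  Finset.sum_le_sum_of_subset_of_nonneg (Finset.range_subset_range.2 hab)
    fun _ _ _ => by positivity

section Gain

variable {C : Type*} [DecidableEq C] {c : C} {W S : Finset C}

lemma Hval_card_insert_inter_sub_nonneg :
    0 ≤ Hval (insert c W ∩ S).card - Hval (W ∩ S).card :=
  sub_nonneg.2 <| Hval_mono <| card_le_card <| inter_subset_inter_right <| subset_insert c W

lemma Hval_card_insert_inter_sub_of_mem (hcS : c ∈ S) (hcW : c ∉ W) :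
    Hval (insert c W ∩ S).card - Hval (W ∩ S).card = 1 / ((W ∩ S).card + 1) := by
  have hc : c ∉ W ∩ S := fun h => hcW (mem_inter.1 h).1
  rw [insert_inter_of_mem hcS, card_insert_of_notMem hc, Hval_succ]
  ring

end Gain

lemma pavScore_insert_sub {C : Type*} [DecidableEq C] {n : ℕ} (A : Fin n → Finset C)
    (W : Finset C) (c : C) :
    pavScore A (insert c W) - pavScore A W =
      ∑ i, (Hval (insert c W ∩ A i).card - Hval (W ∩ A i).card) := by
  rw [pavScore, pavScore, sum_sub_distrib]

theorem card_div_le_pavScore_insert_sub {C : Type*} [DecidableEq C] {n ℓ : ℕ}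
    (A : Fin n → Finset C) (W : Finset C) (X : Finset (Fin n))
    (hrep : ∀ i ∈ X, (W ∩ A i).card < ℓ)
    (c : C) (hcX : ∀ i ∈ X, c ∈ A i) (hcW : c ∉ W) :
    (X.card : ℝ) / ℓ ≤ pavScore A (insert c W) - pavScore A W := by
  have hgain : ∀ i ∈ X, (1 : ℝ) / ℓ ≤ Hval (insert c W ∩ A i).card - Hval (W ∩ A i).card := by
    intro i hi
    rw [Hval_card_insert_inter_sub_of_mem (hcX i hi) hcW]
    have hlt : ((W ∩ A i).card : ℝ) + 1 ≤ ℓ := by exact_mod_cast hrep i hi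
    exact one_div_le_one_div_of_le (by positivity) hlt
  rw [pavScore_insert_sub]
  calc (X.card : ℝ) / ℓ = ∑ _i ∈ X, (1 : ℝ) / ℓ := by simp [div_eq_mul_inv]
    _ ≤ ∑ i ∈ X, (Hval (insert c W ∩ A i).card - Hval (W ∩ A i).card) := sum_le_sum hgain
    _ ≤ ∑ i, (Hval (insert c W ∩ A i).card - Hval (W ∩ A i).card) :=
      sum_le_sum_of_subset_of_nonneg (subset_univ X) fun _ _ _ =>
        Hval_card_insert_inter_sub_nonneg

theorem stmt14_general {C : Type*} [DecidableEq C] {n k ℓ : ℕ}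
    (A : Fin n → Finset C) (W : Finset C)
    (hl1 : 1 ≤ ℓ)
    (X : Finset (Fin n))
    (hXcard : (ℓ : ℝ) * n / k ≤ (X.card : ℝ))
    (hrep : ∀ i ∈ X, (W ∩ A i).card ≤ ℓ - 1)
    (c : C) (hcX : ∀ i ∈ X, c ∈ A i) (hcW : c ∉ W) :
    (X.card : ℝ) / ℓ ≤ pavScore A (insert c W) - pavScore A W ∧
    (n : ℝ) / k ≤ (X.card : ℝ) / ℓ := by
  refine ⟨card_div_le_pavScore_insert_sub A W X (fun i hi => by have := hrep i hi; omega)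
    c hcX hcW, ?_⟩
  have hl : (ℓ : ℝ) ≠ 0 := by positivity
  calc (n : ℝ) / k = (ℓ : ℝ) * n / k / ℓ := by field_simp
    _ ≤ (X.card : ℝ) / ℓ := by gcongr

theorem stmt14 {C : Type*} [Fintype C] [DecidableEq C] {n k ℓ : ℕ}
    (A : Fin n → Finset C) (W : Finset C)
    (hk : 1 ≤ k) (hW : W.card = k) (hl1 : 1 ≤ ℓ) (hlk : ℓ ≤ k)
    (X : Finset (Fin n))
    (hXcard : (ℓ : ℝ) * n / k ≤ (X.card : ℝ))
    (hXint : ℓ ≤ (Finset.univ.filter (fun c : C => ∀ i ∈ X, c ∈ A i)).card)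
    (hrep : ∀ i ∈ X, (W ∩ A i).card ≤ ℓ - 1)
    (c : C) (hcX : ∀ i ∈ X, c ∈ A i) (hcW : c ∉ W) :
    (X.card : ℝ) / ℓ ≤ pavScore A (insert c W) - pavScore A W ∧
    (n : ℝ) / k ≤ (X.card : ℝ) / ℓ :=
  stmt14_general A W hl1 X hXcard hrep c hcX hcW
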